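/- With G = PSL_2(C), K = PSU(2), A^+ = {a_t : t >= 0} and H the stabilizer of the unit hemisphere: for every epsilon > 0 there exists T_0 such that whenever t > T_0 and k in K satisfy a_t k in H K A^+, then k lies in K_epsilon M, where K_epsilon is the epsilon-ball around the identity in K and M = {diag(e^{i theta}, e^{-i theta})}. -/

import Mathlib

open Matrix

noncomputable section

/-- The Poincaré extension of the Möbius action of `PSL₂(ℂ)` to the upper
half-space `H³ = {(z, r) : z ∈ ℂ, r > 0}`. -/
def actM (g : Matrix (Fin 2) (Fin 2) ℂ) (p : ℂ × ℝ) : ℂ × ℝ :=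
  (((g 0 0 * p.1 + g 0 1) *
        ((starRingEnd ℂ) (g 1 0) * (starRingEnd ℂ) p.1 + (starRingEnd ℂ) (g 1 1)) +
      g 0 0 * (starRingEnd ℂ) (g 1 0) * (p.2 : ℂ) ^ 2) /
      ((‖g 1 0 * p.1 + g 1 1‖ ^ 2 + ‖g 1 0‖ ^ 2 * p.2 ^ 2 : ℝ) : ℂ),
   p.2 / (‖g 1 0 * p.1 + g 1 1‖ ^ 2 + ‖g 1 0‖ ^ 2 * p.2 ^ 2))

/-- `a_t = diag(e^{t/2}, e^{-t/2})`. -/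
def amat (t : ℝ) : Matrix (Fin 2) (Fin 2) ℂ :=
  !![Complex.exp ((t : ℂ) / 2), 0; 0, Complex.exp (-(t : ℂ) / 2)]

/-- `m_θ = diag(e^{iθ}, e^{-iθ})`, an element of `M`. -/
def mmat (θ : ℝ) : Matrix (Fin 2) (Fin 2) ℂ :=
  !![Complex.exp ((θ : ℂ) * Complex.I), 0; 0, Complex.exp (-(θ : ℂ) * Complex.I)]

/-- The unit hemisphere `Ĉ₀` in `H³` above the unit circle `C₀ ⊂ ℂ`. -/
def hemi : Set (ℂ × ℝ) := {p | 0 < p.2 ∧ ‖p.1‖ ^ 2 + p.2 ^ 2 = 1}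

/-- `H = Stab_G(Ĉ₀)`, the set-wise stabilizer of the unit hemisphere. -/
def Hset : Set (Matrix (Fin 2) (Fin 2) ℂ) := {g | g.det = 1 ∧ actM g '' hemi = hemi}

/-- `K = PSU(2)`, the stabilizer of `j = (0,1)`. -/
def Kset : Set (Matrix (Fin 2) (Fin 2) ℂ) :=
  {g | g.det = 1 ∧ actM g ((0 : ℂ), (1 : ℝ)) = ((0 : ℂ), (1 : ℝ))}

/-- A distance on `2×2` complex matrices (sum of entrywise distances),
used to measure `ε`-balls in `G` and in `K`. -/
def mdist (g h : Matrix (Fin 2) (Fin 2) ℂ) : ℝ :=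
  ‖g 0 0 - h 0 0‖ + ‖g 0 1 - h 0 1‖ +
    ‖g 1 0 - h 1 0‖ + ‖g 1 1 - h 1 1‖

/-!
Every `k ∈ K` is `[[d̄, -c̄], [c, d]]` with `|c|² + |d|² = 1`. Since `k₀ a_s` sends `(0, e^{-s})`
to `j` and `h₀ j` lies on the unit hemisphere, the relation `a_t k = h₀ k₀ a_s` puts `a_t k (0, r)`,
`r = e^{-s} ∈ (0, 1]`, on the unit hemisphere. Computing `k (0, r)` explicitly turns this into one
real equation in `|c|²`, `r²` and `e^{2t}`, which forces `|c|² (1 + e^{2t}) ≤ 1`. So `|c| < e^{-t}`,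
and `k = k' m_θ` with `k' = [[|d|, -c̄'], [c', |d|]]`, `|c'| = |c|`, at distance `≤ 4 |c|` from `1`.
-/

open ComplexConjugate

def suMat (c d : ℂ) : Matrix (Fin 2) (Fin 2) ℂ := !![conj d, -conj c; c, d]

lemma actM_suMat_zero (c d : ℂ) (r : ℝ) :
    actM (suMat c d) (0, r) =
      (((r ^ 2 - 1) / (‖d‖ ^ 2 + ‖c‖ ^ 2 * r ^ 2) : ℝ) * (conj c * conj d),
        r / (‖d‖ ^ 2 + ‖c‖ ^ 2 * r ^ 2)) := by
  simp only [actM, suMat, of_apply, cons_val', cons_val_zero, cons_val_one, empty_val',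
    cons_val_fin_one, mul_zero, zero_add, map_zero]
  congr 1
  push_cast
  ring

lemma suMat_mem_Kset {c d : ℂ} (hcd : ‖c‖ ^ 2 + ‖d‖ ^ 2 = 1) : suMat c d ∈ Kset := by
  refine ⟨?_, ?_⟩
  · rw [suMat, det_fin_two_of, ← Complex.ofReal_one, ← hcd]
    push_cast [← Complex.mul_conj']
    ring
  · rw [actM_suMat_zero, add_comm, one_pow, mul_one, hcd]
    simp

lemma exists_suMat_of_mem_Kset {k : Matrix (Fin 2) (Fin 2) ℂ} (hk : k ∈ Kset) :
    ∃ c d : ℂ, ‖c‖ ^ 2 + ‖d‖ ^ 2 = 1 ∧ k = suMat c d := by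
  obtain ⟨hdet, hfix⟩ := hk
  rw [det_fin_two] at hdet
  simp only [actM, Prod.mk.injEq, mul_zero, zero_add, map_zero, one_pow, mul_one,
    Complex.ofReal_one] at hfix
  obtain ⟨hnum, hden⟩ := hfix
  have hnorm : ‖k 1 0‖ ^ 2 + ‖k 1 1‖ ^ 2 = 1 := by
    have : ‖k 1 1‖ ^ 2 + ‖k 1 0‖ ^ 2 ≠ 0 := by
      rintro h; simp [h] at hden
    field_simp at hden
    linarith
  have hnorm' : k 1 0 * conj (k 1 0) + k 1 1 * conj (k 1 1) = 1 := by
    rw [Complex.mul_conj', Complex.mul_conj', ← Complex.ofReal_one, ← hnorm]; push_cast; ring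
  rw [add_comm (‖k 1 1‖ ^ 2), hnorm, Complex.ofReal_one, div_one] at hnum
  have h00 : k 0 0 = conj (k 1 1) := by
    linear_combination conj (k 1 1) * hdet + k 1 0 * hnum - k 0 0 * hnorm'
  have h01 : k 0 1 = -conj (k 1 0) := by
    linear_combination -conj (k 1 0) * hdet + k 1 1 * hnum - k 0 1 * hnorm'
  exact ⟨k 1 0, k 1 1, hnorm, by rw [suMat, ← h00, ← h01]; exact eta_fin_two k⟩

lemma suMat_mul_mmat (c d : ℂ) (θ : ℝ) :
    suMat c d * mmat θ =
      suMat (c * Complex.exp (θ * Complex.I)) (d * Complex.exp (-θ * Complex.I)) := by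
  have hconj (z : ℂ) : conj (Complex.exp z) = Complex.exp (conj z) := (Complex.exp_conj z).symm
  rw [suMat, suMat, mmat, mul_fin_two]
  simp [hconj, Complex.conj_ofReal]

lemma suMat_eq_mul_mmat_neg_arg (c d : ℂ) :
    suMat c d = suMat (c * Complex.exp (Complex.arg d * Complex.I)) ‖d‖ * mmat (-Complex.arg d) := by
  rw [suMat_mul_mmat, mul_assoc, ← Complex.exp_add]
  push_cast
  simp only [neg_mul, neg_neg, add_neg_cancel, Complex.exp_zero, mul_one,
    Complex.norm_mul_exp_arg_mul_I]

lemma mdist_suMat_one (c d : ℂ) : mdist (suMat c d) 1 = 2 * ‖d - 1‖ + 2 * ‖c‖ := by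
  have : ‖conj d - 1‖ = ‖d - 1‖ := by rw [← Complex.norm_conj, map_sub, Complex.conj_conj, map_one]
  simp only [mdist, suMat, of_apply, cons_val', cons_val_zero, cons_val_one, cons_val_fin_one,
    one_apply_eq, one_apply_ne, ne_eq, zero_ne_one, one_ne_zero, not_false_eq_true, sub_zero,
    norm_neg, Complex.norm_conj, this]
  ring

lemma mdist_suMat_ofReal_one_le {c : ℂ} {r : ℝ} (hr : 0 ≤ r) (hcr : ‖c‖ ^ 2 + r ^ 2 = 1) :
    mdist (suMat c r) 1 ≤ 4 * ‖c‖ := by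
  have hr1 : r ≤ 1 := by nlinarith [norm_nonneg c]
  have hc1 : ‖c‖ ≤ 1 := by nlinarith [norm_nonneg c]
  have hdist : ‖(r : ℂ) - 1‖ = 1 - r := by
    rw [← Complex.ofReal_one, ← Complex.ofReal_sub, Complex.norm_real,
      Real.norm_of_nonpos (by linarith), neg_sub]
  have hgap : 1 - r ≤ ‖c‖ ^ 2 := by nlinarith
  rw [mdist_suMat_one, hdist]
  nlinarith [norm_nonneg c]

lemma amat_eq (t : ℝ) :
    amat t = !![((Real.exp (t / 2) : ℝ) : ℂ), 0; 0, ((Real.exp (-t / 2) : ℝ) : ℂ)] := by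
  simp only [amat, Complex.ofReal_exp]
  push_cast
  rfl

lemma actM_amat_mul (t : ℝ) (g : Matrix (Fin 2) (Fin 2) ℂ) (p : ℂ × ℝ) :
    actM (amat t * g) p = (Real.exp t * (actM g p).1, Real.exp t * (actM g p).2) := by
  have hexp : Real.exp t = Real.exp (t / 2) / Real.exp (-t / 2) := by
    rw [← Real.exp_sub]; ring_nf
  have hab : Real.exp (t / 2) * Real.exp (-t / 2) = 1 := by
    rw [← Real.exp_add]; ring_nf; exact Real.exp_zero
  rw [amat_eq, eta_fin_two g, mul_fin_two, hexp]
  set a := Real.exp (t / 2)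
  set b := Real.exp (-t / 2)
  have hb : 0 < b := Real.exp_pos _
  have hnorm (w : ℂ) : ‖(b : ℂ) * w‖ = b * ‖w‖ := by
    rw [norm_mul, Complex.norm_real, Real.norm_of_nonneg hb.le]
  simp only [actM, of_apply, cons_val', cons_val_zero, cons_val_one, empty_val',
    cons_val_fin_one, zero_mul, add_zero, zero_add, mul_assoc, ← mul_add, hnorm, map_mul,
    Complex.conj_ofReal]
  have hden (x y z : ℝ) : (b * x) ^ 2 + (b * y) ^ 2 * z = b ^ 2 * (x ^ 2 + y ^ 2 * z) := by ring
  ext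
  · simp only [hden]
    push_cast
    field_simp
  · simp only [hden]
    field_simp
    rw [mul_assoc, mul_comm b, hab, mul_one]

lemma mul_conj_add_mul_conj_suMat_row {c d : ℂ} (hcd : ‖c‖ ^ 2 + ‖d‖ ^ 2 = 1) (A B C D : ℂ) :
    (A * conj d + B * c) * conj (C * conj d + D * c) +
        (A * -conj c + B * d) * conj (C * -conj c + D * d) =
      A * conj C + B * conj D := by
  have h : c * conj c + d * conj d = 1 := by
    rw [Complex.mul_conj', Complex.mul_conj', ← Complex.ofReal_one, ← hcd]; push_cast; ring
  simp only [map_add, map_mul, map_neg, Complex.conj_conj]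
  linear_combination (A * conj C + B * conj D) * h

lemma norm_sq_add_norm_sq_suMat_row {c d : ℂ} (hcd : ‖c‖ ^ 2 + ‖d‖ ^ 2 = 1) (C D : ℂ) :
    ‖C * conj d + D * c‖ ^ 2 + ‖C * -conj c + D * d‖ ^ 2 = ‖C‖ ^ 2 + ‖D‖ ^ 2 := by
  apply Complex.ofReal_injective
  push_cast [← Complex.mul_conj']
  exact mul_conj_add_mul_conj_suMat_row hcd C D C D

-- `actM` is not known here to be an action, so the composite is computed directly.
lemma actM_mul_suMat_mul_amat (g : Matrix (Fin 2) (Fin 2) ℂ) {c d : ℂ}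
    (hcd : ‖c‖ ^ 2 + ‖d‖ ^ 2 = 1) (s : ℝ) :
    actM (g * suMat c d * amat s) (0, Real.exp (-s)) = actM g (0, 1) := by
  have hexp : Real.exp (-s) = Real.exp (-s / 2) ^ 2 := by
    rw [← Real.exp_nat_mul]; ring_nf
  have hab : Real.exp (s / 2) * Real.exp (-s / 2) = 1 := by
    rw [← Real.exp_add]; ring_nf; exact Real.exp_zero
  rw [amat_eq, eta_fin_two g, suMat, mul_fin_two, mul_fin_two, hexp]
  set a := Real.exp (s / 2)
  set b := Real.exp (-s / 2)
  have hb : 0 < b := Real.exp_pos _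
  have hden : ‖(g 1 0 * -conj c + g 1 1 * d) * b‖ ^ 2 +
      ‖(g 1 0 * conj d + g 1 1 * c) * a‖ ^ 2 * (b ^ 2) ^ 2 = b ^ 2 * (‖g 1 1‖ ^ 2 + ‖g 1 0‖ ^ 2) := by
    simp only [norm_mul, Complex.norm_real, Real.norm_eq_abs, mul_pow, sq_abs]
    linear_combination b ^ 2 * norm_sq_add_norm_sq_suMat_row hcd (g 1 0) (g 1 1) +
      b ^ 2 * ‖g 1 0 * conj d + g 1 1 * c‖ ^ 2 * (a * b + 1) * hab
  simp only [actM, of_apply, cons_val', cons_val_zero, cons_val_one, empty_val',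
    cons_val_fin_one, add_zero, zero_add, mul_zero, map_zero, hden, one_pow, mul_one,
    Complex.ofReal_one]
  have hb2 : (b : ℂ) ^ 2 ≠ 0 := by exact_mod_cast (pow_pos hb 2).ne'
  have habC : (a : ℂ) * b = 1 := by exact_mod_cast hab
  rw [Prod.mk.injEq]
  refine ⟨?_, ?_⟩
  · rw [Complex.ofReal_mul, ← div_div]
    congr 1
    rw [div_eq_iff (by exact_mod_cast hb2)]
    simp only [map_mul, Complex.conj_ofReal]
    push_cast
    linear_combination (b : ℂ) ^ 2 * mul_conj_add_mul_conj_suMat_row hcd (g 0 0) (g 0 1) (g 1 0) (g 1 1) +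
      (b : ℂ) ^ 2 * (a * b + 1) * (g 0 0 * conj d + g 0 1 * c) *
        conj (g 1 0 * conj d + g 1 1 * c) * habC
  · rw [← div_div, div_self (pow_pos hb 2).ne']

lemma zero_one_mem_hemi : ((0 : ℂ), (1 : ℝ)) ∈ hemi := by
  simp [hemi]

lemma exp_two_mul_mul_eq_sq_of_actM_mem_hemi {c d : ℂ} {t r : ℝ} (hr : 0 < r)
    (h : actM (amat t * suMat c d) (0, r) ∈ hemi) :
    Real.exp (2 * t) * (‖c‖ ^ 2 * ‖d‖ ^ 2 * (1 - r ^ 2) ^ 2 + r ^ 2) =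
      (‖d‖ ^ 2 + ‖c‖ ^ 2 * r ^ 2) ^ 2 := by
  rw [actM_amat_mul, actM_suMat_zero] at h
  obtain ⟨hpos, hsum⟩ := h
  set p := ‖d‖ ^ 2 + ‖c‖ ^ 2 * r ^ 2
  have hp : 0 < p := by
    have := pos_of_mul_pos_right hpos (Real.exp_pos t).le
    exact (div_pos_iff_of_pos_left hr).mp this
  simp only [norm_mul, Complex.norm_real, Real.norm_eq_abs, Complex.norm_conj, mul_pow,
    sq_abs, div_pow] at hsum
  field_simp at hsum
  rw [show Real.exp (2 * t) = Real.exp t ^ 2 by rw [← Real.exp_nat_mul]; ring_nf]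
  linear_combination hsum

-- The hemisphere relation above with `x = |c|²`, `y = |d|²`, `u = r²`, `E = e^{2t}`.
lemma mul_one_add_le_one_of_mul_eq_sq {x y u E : ℝ} (hy : 0 ≤ y) (hxy : x + y = 1)
    (hu : 0 < u) (hu1 : u ≤ 1) (hE : 1 < E)
    (h : E * (x * y * (1 - u) ^ 2 + u) = (y + x * u) ^ 2) : x * (1 + E) ≤ 1 := by
  have hp : 0 < y + x * u := by nlinarith
  have hfactor : x * y * (1 - u) ^ 2 + u = (y + x * u) * (x * (1 - u) + u) := by
    rw [← sub_eq_of_eq_add' hxy.symm]; ring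
  have hlin : x * (1 - u) * (1 + E) = 1 - E * u := by
    rw [hfactor, sq, mul_left_comm, mul_right_inj' hp.ne'] at h
    linear_combination h + hxy
  rcases hu1.lt_or_eq with hu1 | rfl
  · -- `1 - E u ≤ 1 - u`, and `1 - u > 0` can be cancelled
    nlinarith
  · linarith

lemma norm_lt_exp_neg_of_actM_mem_hemi {c d : ℂ} {t r : ℝ} (hcd : ‖c‖ ^ 2 + ‖d‖ ^ 2 = 1)
    (ht : 0 < t) (hr : 0 < r) (hr1 : r ≤ 1) (h : actM (amat t * suMat c d) (0, r) ∈ hemi) :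
    ‖c‖ < Real.exp (-t) := by
  have hbound : ‖c‖ ^ 2 * (1 + Real.exp (2 * t)) ≤ 1 :=
    mul_one_add_le_one_of_mul_eq_sq (by positivity) hcd (by positivity) (pow_le_one₀ hr.le hr1)
      (Real.one_lt_exp_iff.2 (by linarith)) (by simpa using exp_two_mul_mul_eq_sq_of_actM_mem_hemi hr h)
  have hsq : (‖c‖ * Real.exp t) ^ 2 < 1 := by
    rw [mul_pow, ← Real.exp_nat_mul]
    push_cast
    nlinarith [Real.exp_pos (2 * t)]
  rw [Real.exp_neg, ← one_div, lt_div_iff₀ (Real.exp_pos t)]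
  exact lt_of_pow_lt_pow_left₀ 2 zero_le_one (by rwa [one_pow])

/-- For every `ε > 0` there is `T₀` such that whenever `t > T₀`, `k ∈ K` and
`a_t k ∈ H K A⁺`, then `k ∈ K_ε M`. -/
theorem K_component_small (ε : ℝ) (hε : 0 < ε) :
    ∃ T₀ : ℝ, ∀ t > T₀, ∀ k ∈ Kset,
      (∃ h₀ ∈ Hset, ∃ k₀ ∈ Kset, ∃ s ≥ (0 : ℝ), amat t * k = h₀ * k₀ * amat s) →
      ∃ k' ∈ Kset, ∃ θ : ℝ, mdist k' 1 < ε ∧ k = k' * mmat θ := by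
  refine ⟨max 0 (-Real.log (ε / 4)), fun t ht k hk ⟨h₀, hh₀, k₀, hk₀, s, hs, hak⟩ => ?_⟩
  obtain ⟨ht₀, htε⟩ := max_lt_iff.1 ht
  obtain ⟨c, d, hcd, rfl⟩ := exists_suMat_of_mem_Kset hk
  obtain ⟨c₀, d₀, hcd₀, rfl⟩ := exists_suMat_of_mem_Kset hk₀
  have hmem : actM (amat t * suMat c d) (0, Real.exp (-s)) ∈ hemi := by
    rw [hak, actM_mul_suMat_mul_amat h₀ hcd₀, ← hh₀.2]
    exact Set.mem_image_of_mem _ zero_one_mem_hemi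
  have hc : ‖c‖ < Real.exp (-t) :=
    norm_lt_exp_neg_of_actM_mem_hemi hcd ht₀ (Real.exp_pos _)
      (Real.exp_le_one_iff.2 (by linarith)) hmem
  have htε' : Real.exp (-t) < ε / 4 := (Real.lt_log_iff_exp_lt (by positivity)).1 (by linarith)
  set c' := c * Complex.exp (Complex.arg d * Complex.I)
  have hc' : ‖c'‖ = ‖c‖ := by simp [c', Complex.norm_exp_ofReal_mul_I]
  refine ⟨suMat c' ‖d‖, suMat_mem_Kset (by simpa [hc'] using hcd), -Complex.arg d, ?_,
    suMat_eq_mul_mmat_neg_arg c d⟩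
  calc mdist (suMat c' ‖d‖) 1 ≤ 4 * ‖c'‖ := mdist_suMat_ofReal_one_le (norm_nonneg d) (hc' ▸ hcd)
    _ < ε := by linarith
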